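/- Let δ ≥ 3 be an integer, r_δ = δ - 1 + 2/δ, and let H be a connected hypergraph with minimum degree at least δ such that H ≠ K_{δ+1}. Let U = {v ∈ V(H) : d_H(v) = δ} and suppose σ := |U|·r_δ - d(H(U)) ≥ 0 and U ≠ V(H). Then d(H) ≥ δn + n(δ-2)/(δ² + 2δ - 2) where n = |V(H)|. -/

import Mathlib

/-- A finite hypergraph: finite vertex set, finite edge (name) set, and an
incidence function assigning to each edge its set of endpoints (at least 2).
Edge names outside `edges` are normalized to have empty incidence. -/
structure FinHypergraph where
  verts : Finset ℕ
  edges : Finset ℕ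
  inc : ℕ → Finset ℕ
  inc_sub : ∀ e ∈ edges, inc e ⊆ verts
  two_le_inc : ∀ e ∈ edges, 2 ≤ (inc e).card
  inc_empty : ∀ e ∉ edges, inc e = ∅

namespace FinHypergraph

theorem inc_subset (H : FinHypergraph) (e : ℕ) : H.inc e ⊆ H.verts := by
  by_cases h : e ∈ H.edges
  · exact H.inc_sub e h
  · rw [H.inc_empty e h]; exact Finset.empty_subset _

/-- Degree of a vertex: number of incident edges. -/
def degree (H : FinHypergraph) (v : ℕ) : ℕ :=
  (H.edges.filter (fun e => v ∈ H.inc e)).card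

/-- The set of edges incident with `v`. -/
def edgesAt (H : FinHypergraph) (v : ℕ) : Finset ℕ :=
  H.edges.filter (fun e => v ∈ H.inc e)

/-- Degree sum `d(H)`. -/
def degSum (H : FinHypergraph) : ℕ := ∑ v ∈ H.verts, H.degree v

/-- Maximum degree `Δ(H)` (0 for the empty hypergraph). -/
def maxDegree (H : FinHypergraph) : ℕ := H.verts.sup H.degree

/-- Minimum degree `δ(H)` (0 for the empty hypergraph). -/
def minDegree (H : FinHypergraph) : ℕ :=
  if h : H.verts.Nonempty then H.verts.inf' h H.degree else 0

/-- Induced subhypergraph `H[X]`. -/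
def induce (H : FinHypergraph) (X : Finset ℕ) : FinHypergraph where
  verts := X ∩ H.verts
  edges := H.edges.filter (fun e => H.inc e ⊆ X ∩ H.verts)
  inc := fun e =>
    if e ∈ H.edges.filter (fun e => H.inc e ⊆ X ∩ H.verts) then H.inc e else ∅
  inc_sub := by
    intro e he
    simp only [if_pos he]
    exact (Finset.mem_filter.mp he).2
  two_le_inc := by
    intro e he
    simp only [if_pos he]
    exact H.two_le_inc e (Finset.mem_filter.mp he).1
  inc_empty := by
    intro e he
    simp only [if_neg he]

/-- The hypergraph `H(X)` obtained by shrinking `H` to `X`. -/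
def shrink (H : FinHypergraph) (X : Finset ℕ) : FinHypergraph where
  verts := X ∩ H.verts
  edges := H.edges.filter (fun e => 2 ≤ (H.inc e ∩ (X ∩ H.verts)).card)
  inc := fun e =>
    if e ∈ H.edges.filter (fun e => 2 ≤ (H.inc e ∩ (X ∩ H.verts)).card) then
      H.inc e ∩ (X ∩ H.verts) else ∅
  inc_sub := by
    intro e he
    simp only [if_pos he]
    exact Finset.inter_subset_right
  two_le_inc := by
    intro e he
    simp only [if_pos he]
    exact (Finset.mem_filter.mp he).2
  inc_empty := by
    intro e he
    simp only [if_neg he]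

/-- `H - v`. -/
def deleteVert (H : FinHypergraph) (v : ℕ) : FinHypergraph := H.induce (H.verts.erase v)

/-- The empty hypergraph `K_0`. -/
def emptyHG : FinHypergraph :=
  ⟨∅, ∅, fun _ => ∅, fun e he => absurd he (Finset.notMem_empty e),
    fun e he => absurd he (Finset.notMem_empty e), fun _ _ => rfl⟩

/-- The one-vertex edgeless hypergraph `K_1` on vertex `v`. -/
def singleHG (v : ℕ) : FinHypergraph :=
  ⟨{v}, ∅, fun _ => ∅, fun e he => absurd he (Finset.notMem_empty e),
    fun e he => absurd he (Finset.notMem_empty e), fun _ _ => rfl⟩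

/-- FinHypergraph isomorphism. -/
def Iso (H₁ H₂ : FinHypergraph) : Prop :=
  ∃ φ ψ : ℕ → ℕ, Set.BijOn φ ↑H₁.verts ↑H₂.verts ∧ Set.BijOn ψ ↑H₁.edges ↑H₂.edges ∧
    ∀ e ∈ H₁.edges, H₂.inc (ψ e) = (H₁.inc e).image φ

/-- A class of hypergraphs closed under isomorphism. -/
def IsoClosed (P : Set FinHypergraph) : Prop :=
  ∀ H₁ H₂ : FinHypergraph, Iso H₁ H₂ → H₁ ∈ P → H₂ ∈ P

/-- Hereditary: closed under induced subhypergraphs. -/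
def Hereditary (P : Set FinHypergraph) : Prop :=
  ∀ H ∈ P, ∀ X : Finset ℕ, H.induce X ∈ P

/-- A smooth hypergraph property: isomorphism-closed, hereditary and non-trivial. -/
def Smooth (P : Set FinHypergraph) : Prop :=
  IsoClosed P ∧ Hereditary P ∧ (∃ H ∈ P, H.verts.Nonempty) ∧ (∃ H : FinHypergraph, H ∉ P)

/-- `F(P)`: hypergraphs not in `P` all of whose vertex-deleted subhypergraphs are in `P`. -/
def critFam (P : Set FinHypergraph) : Set FinHypergraph :=
  {H : FinHypergraph | H ∉ P ∧ ∀ v ∈ H.verts, H.deleteVert v ∈ P}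

/-- `d(P) = min {δ(G) : G ∈ F(P)}`. -/
noncomputable def dP (P : Set FinHypergraph) : ℕ := sInf (minDegree '' critFam P)

/-- Disjoint union of two hypergraphs. -/
def disjUnion (H₁ H₂ : FinHypergraph) : FinHypergraph where
  verts := H₁.verts ∪ H₂.verts
  edges := H₁.edges ∪ H₂.edges
  inc := fun e => H₁.inc e ∪ H₂.inc e
  inc_sub := fun e _ => Finset.union_subset_union (H₁.inc_subset e) (H₂.inc_subset e)
  two_le_inc := by
    intro e he
    rcases Finset.mem_union.mp he with h | h
    · exact le_trans (H₁.two_le_inc e h) (Finset.card_le_card Finset.subset_union_left)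
    · exact le_trans (H₂.two_le_inc e h) (Finset.card_le_card Finset.subset_union_right)
  inc_empty := by
    intro e he
    rw [Finset.mem_union] at he
    push_neg at he
    simp only [H₁.inc_empty e he.1, H₂.inc_empty e he.2, Finset.empty_union]

/-- Additive: closed under vertex-disjoint unions. -/
def Additive (P : Set FinHypergraph) : Prop :=
  ∀ H₁ H₂ : FinHypergraph, H₁ ∈ P → H₂ ∈ P → Disjoint H₁.verts H₂.verts →
    Disjoint H₁.edges H₂.edges → disjUnion H₁ H₂ ∈ P

/-- A `(P,L)`-coloring exists: an `L`-coloring each of whose color classes induces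
a hypergraph in `P`. -/
def ColorableWith (P : Set FinHypergraph) (H : FinHypergraph) (L : ℕ → Finset ℕ) : Prop :=
  ∃ φ : ℕ → ℕ, (∀ v ∈ H.verts, φ v ∈ L v) ∧
    ∀ c : ℕ, H.induce (H.verts.filter (fun v => φ v = c)) ∈ P

/-- `H` is `(P,L)`-critical. -/
def Critical (P : Set FinHypergraph) (H : FinHypergraph) (L : ℕ → Finset ℕ) : Prop :=
  ¬ ColorableWith P H L ∧ ∀ v ∈ H.verts, ColorableWith P (H.deleteVert v) L

/-- The `P`-list-chromatic number `χ^ℓ(H : P)`. -/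
noncomputable def listChrom (P : Set FinHypergraph) (H : FinHypergraph) : ℕ :=
  sInf {k : ℕ | ∀ L : ℕ → Finset ℕ, (∀ v ∈ H.verts, k ≤ (L v).card) → ColorableWith P H L}

/-- The `P`-chromatic number `χ(H : P)`. -/
noncomputable def chrom (P : Set FinHypergraph) (H : FinHypergraph) : ℕ :=
  sInf {k : ℕ | ∃ φ : ℕ → ℕ, (∀ v ∈ H.verts, φ v ∈ Finset.range k) ∧
    ∀ c : ℕ, H.induce (H.verts.filter (fun v => φ v = c)) ∈ P}

/-- `(χ^ℓ, P)`-critical: every proper induced subhypergraph has strictly smaller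
`P`-list-chromatic number. -/
def ListCritical (P : Set FinHypergraph) (H : FinHypergraph) : Prop :=
  ∀ X : Finset ℕ, X ⊂ H.verts → listChrom P (H.induce X) < listChrom P H

/-- Two vertices lie in a common edge. -/
def Adj (H : FinHypergraph) (u v : ℕ) : Prop := ∃ e ∈ H.edges, u ∈ H.inc e ∧ v ∈ H.inc e

/-- Connectedness via hyperpaths. -/
def Connected (H : FinHypergraph) : Prop :=
  H.verts.Nonempty ∧ ∀ u ∈ H.verts, ∀ v ∈ H.verts, Relation.ReflTransGen H.Adj u v

/-- `v` is a separating vertex of `H`. -/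
def IsSepVert (H : FinHypergraph) (v : ℕ) : Prop :=
  ∃ X Y : Finset ℕ, X ∪ Y = H.verts ∧ X ∩ Y = {v} ∧ 2 ≤ X.card ∧ 2 ≤ Y.card ∧
    ∀ e ∈ H.edges, H.inc e ⊆ X ∨ H.inc e ⊆ Y

/-- `B` is a block of `H`: a maximal connected induced subhypergraph without
separating vertices. -/
def IsBlock (H B : FinHypergraph) : Prop :=
  ∃ X ⊆ H.verts, B = H.induce X ∧ B.Connected ∧ (∀ v : ℕ, ¬ B.IsSepVert v) ∧
    ∀ Y : Finset ℕ, X ⊂ Y → Y ⊆ H.verts →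
      ¬ ((H.induce Y).Connected ∧ ∀ v : ℕ, ¬ (H.induce Y).IsSepVert v)

/-- Multiplicity of the pair `u, v`. -/
def mult (H : FinHypergraph) (u v : ℕ) : ℕ :=
  (H.edges.filter (fun e => H.inc e = {u, v})).card

/-- `H = tK_n`: the complete graph on `n` vertices with each edge of multiplicity `t`. -/
def IsTK (H : FinHypergraph) (t n : ℕ) : Prop :=
  H.verts.card = n ∧
    (∀ e ∈ H.edges, ∃ u ∈ H.verts, ∃ v ∈ H.verts, u ≠ v ∧ H.inc e = {u, v}) ∧
    ∀ u ∈ H.verts, ∀ v ∈ H.verts, u ≠ v → H.mult u v = t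

/-- `H = tC_n`: the cycle on `n` vertices (ordinary edges) with each edge of
multiplicity `t`. -/
def IsTC (H : FinHypergraph) (t n : ℕ) : Prop :=
  3 ≤ n ∧ ∃ f : ℕ → ℕ, Set.InjOn f (Set.Iio n) ∧
    H.verts = (Finset.range n).image f ∧
    (∀ e ∈ H.edges, ∃ i < n, H.inc e = {f i, f ((i + 1) % n)}) ∧
    ∀ i < n, (H.edges.filter (fun e => H.inc e = {f i, f ((i + 1) % n)})).card = t

/-- A brick: `tC_n` with `n ≥ 3` odd, or `tK_n`. -/
def IsBrick (H : FinHypergraph) : Prop :=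
  (∃ t ≥ 1, ∃ n : ℕ, 3 ≤ n ∧ Odd n ∧ IsTC H t n) ∨ (∃ t ≥ 1, ∃ n ≥ 1, IsTK H t n)

/-- `r`-regular. -/
def IsRegular (H : FinHypergraph) (r : ℕ) : Prop := ∀ v ∈ H.verts, H.degree v = r

/-- Simple: no parallel edges. -/
def Simple (H : FinHypergraph) : Prop :=
  ∀ e ∈ H.edges, ∀ e' ∈ H.edges, e ≠ e' → H.inc e ≠ H.inc e'

/-- The set `V(H, P, L)` of low vertices (for `d(P) = r`). -/
def lowVerts (H : FinHypergraph) (L : ℕ → Finset ℕ) (r : ℕ) : Finset ℕ :=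
  H.verts.filter (fun v => H.degree v = r * (L v).card)

end FinHypergraph

open FinHypergraph

/-! Each vertex of `U` has degree `δ` and every other vertex degree at least `δ + 1`, which
gives `(δ + 1) n ≤ d(H) + |U|`. Counting edge by edge, an edge meeting `U` in `a` vertices
contributes `2a ≤ |e| + a` if `a ≥ 2` and `2a ≤ 2 ≤ |e|` otherwise, so
`2δ|U| ≤ d(H) + d(H(U))`. Together with `σ ≥ 0`, i.e. `d(H(U)) ≤ r_δ |U|`, eliminating `|U|`
leaves `(δ + 1)(δ² + δ - 2) n ≤ (δ² + 2δ - 2) d(H)`, which is the claim. -/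

namespace FinHypergraph

open Finset

variable (H : FinHypergraph)

theorem minDegree_le_degree {v : ℕ} (hv : v ∈ H.verts) : H.minDegree ≤ H.degree v := by
  rw [minDegree, dif_pos ⟨v, hv⟩]
  exact inf'_le _ hv

theorem sum_degree_eq_sum_card_inter (X : Finset ℕ) :
    ∑ v ∈ X, H.degree v = ∑ e ∈ H.edges, #(H.inc e ∩ X) := by
  refine (sum_card_bipartiteAbove_eq_sum_card_bipartiteBelow (r := fun v e => v ∈ H.inc e)).trans
    (sum_congr rfl fun e _ => ?_)
  rw [bipartiteBelow, filter_mem_eq_inter, inter_comm]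

theorem degSum_eq_sum_card_inc : H.degSum = ∑ e ∈ H.edges, #(H.inc e) := by
  rw [degSum, sum_degree_eq_sum_card_inter]
  exact sum_congr rfl fun e _ => by rw [inter_eq_left.mpr (H.inc_subset e)]

theorem shrink_degSum (X : Finset ℕ) :
    (H.shrink X).degSum =
      ∑ e ∈ H.edges with 2 ≤ #(H.inc e ∩ (X ∩ H.verts)), #(H.inc e ∩ (X ∩ H.verts)) := by
  rw [degSum_eq_sum_card_inc]
  exact sum_congr rfl fun e he => congrArg card (if_pos he)

theorem succ_mul_card_le_degSum_add_card {δ : ℕ} (hδ : ∀ v ∈ H.verts, δ ≤ H.degree v) :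
    (δ + 1) * #H.verts ≤ H.degSum + #{v ∈ H.verts | H.degree v = δ} := by
  have hvert : ∀ v ∈ H.verts, δ + 1 ≤ H.degree v + if H.degree v = δ then 1 else 0 := by
    intro v hv
    have hv := hδ v hv
    split <;> omega
  calc (δ + 1) * #H.verts = ∑ _v ∈ H.verts, (δ + 1) := by rw [sum_const, smul_eq_mul, mul_comm]
    _ ≤ ∑ v ∈ H.verts, (H.degree v + if H.degree v = δ then 1 else 0) := sum_le_sum hvert
    _ = H.degSum + #{v ∈ H.verts | H.degree v = δ} := by
      rw [sum_add_distrib, sum_boole, Nat.cast_id, degSum]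

theorem two_mul_sum_degree_le_degSum_add_shrink_degSum {X : Finset ℕ} (hX : X ⊆ H.verts) :
    2 * ∑ v ∈ X, H.degree v ≤ H.degSum + (H.shrink X).degSum := by
  rw [sum_degree_eq_sum_card_inter, degSum_eq_sum_card_inc, shrink_degSum,
    inter_eq_left.mpr hX, sum_filter, mul_sum, ← sum_add_distrib]
  refine sum_le_sum fun e he => ?_
  have hsub : #(H.inc e ∩ X) ≤ #(H.inc e) := card_le_card inter_subset_left
  have htwo := H.two_le_inc e he
  split <;> omega

end FinHypergraph

theorem degree_bound_of_counting {K : Type*} [Field K] [LinearOrder K] [IsStrictOrderedRing K]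
    {δ n u d s : K} (hδ : 2 ≤ δ) (hn : (δ + 1) * n ≤ d + u) (hu : 2 * (δ * u) ≤ d + s)
    (hs : s ≤ u * (δ - 1 + 2 / δ)) :
    δ * n + n * (δ - 2) / (δ ^ 2 + 2 * δ - 2) ≤ d := by
  have hδ0 : 0 < δ := by linarith
  have hs' : s * δ ≤ u * (δ ^ 2 - δ + 2) := by
    have hr : (δ - 1 + 2 / δ) * δ = δ ^ 2 - δ + 2 := by field_simp
    simpa only [mul_assoc, hr] using mul_le_mul_of_nonneg_right hs hδ0.le
  have hu' : u * (δ ^ 2 + δ - 2) ≤ d * δ := by nlinarith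
  have hD : 0 < δ ^ 2 + 2 * δ - 2 := by nlinarith
  have hgap : n * (δ - 2) ≤ (d - δ * n) * (δ ^ 2 + 2 * δ - 2) := by nlinarith
  linarith [(div_le_iff₀ hD).mpr hgap]

theorem stmt18_general (δ : ℕ) (hδ : 3 ≤ δ) (rδ : ℚ) (hrδ : rδ = (δ : ℚ) - 1 + 2 / (δ : ℚ))
    (H : FinHypergraph) (hmin : δ ≤ H.minDegree)
    (U : Finset ℕ) (hU : U = H.verts.filter (fun v => H.degree v = δ))
    (hσ : 0 ≤ (U.card : ℚ) * rδ - ((H.shrink U).degSum : ℚ)) :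
    (δ : ℚ) * (H.verts.card : ℚ) +
        (H.verts.card : ℚ) * ((δ : ℚ) - 2) / ((δ : ℚ) ^ 2 + 2 * (δ : ℚ) - 2) ≤
      (H.degSum : ℚ) := by
  have hdeg : ∀ v ∈ H.verts, δ ≤ H.degree v := fun v hv =>
    hmin.trans (H.minDegree_le_degree hv)
  have hUdeg : ∀ v ∈ U, H.degree v = δ := by
    rw [hU]
    exact fun v hv => (Finset.mem_filter.mp hv).2
  have hn := H.succ_mul_card_le_degSum_add_card hdeg
  rw [← hU] at hn
  have hu := H.two_mul_sum_degree_le_degSum_add_shrink_degSum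
    (X := U) (by rw [hU]; exact Finset.filter_subset _ _)
  rw [Finset.sum_const_nat hUdeg, mul_comm _ δ] at hu
  subst hrδ
  have hδ2 : (2 : ℚ) ≤ δ := by exact_mod_cast hδ.trans' (by norm_num)
  exact degree_bound_of_counting (u := (U.card : ℚ)) (s := ((H.shrink U).degSum : ℚ)) hδ2
    (by exact_mod_cast hn) (by exact_mod_cast hu) (by linarith)

/-- Gallai-type degree-sum bound assuming `σ ≥ 0` and `U ≠ V(H)`. -/
theorem stmt18 (δ : ℕ) (hδ : 3 ≤ δ) (rδ : ℚ) (hrδ : rδ = (δ : ℚ) - 1 + 2 / (δ : ℚ))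
    (H : FinHypergraph) (hconn : H.Connected) (hmin : δ ≤ H.minDegree)
    (hK : ¬ IsTK H 1 (δ + 1))
    (U : Finset ℕ) (hU : U = H.verts.filter (fun v => H.degree v = δ))
    (hσ : 0 ≤ (U.card : ℚ) * rδ - ((H.shrink U).degSum : ℚ))
    (hUne : U ≠ H.verts) :
    (δ : ℚ) * (H.verts.card : ℚ) +
        (H.verts.card : ℚ) * ((δ : ℚ) - 2) / ((δ : ℚ) ^ 2 + 2 * (δ : ℚ) - 2) ≤
      (H.degSum : ℚ) :=
  stmt18_general δ hδ rδ hrδ H hmin U hU hσ
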